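/- If a completely regular Hausdorff space X has a dense countably compact subspace, then X is Grothendieck; that is, Cp(X) is a hereditary g-space. -/

import Mathlib

open Set Filter Topology

def IsLimitPointOf {Z : Type*} [TopologicalSpace Z] (x : Z) (S : Set Z) : Prop :=
  ∀ U : Set Z, IsOpen U → x ∈ U → (S ∩ U).Infinite

def CountablyCompactIn {Z : Type*} [TopologicalSpace Z] (A B : Set Z) : Prop :=
  ∀ S ⊆ A, S.Infinite → ∃ x ∈ B, IsLimitPointOf x S

def IsGSpace (Y : Type*) [TopologicalSpace Y] : Prop :=
  ∀ A : Set Y, CountablyCompactIn A Set.univ → IsCompact (closure A)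

def IsHereditaryGSpace (Y : Type*) [TopologicalSpace Y] : Prop :=
  ∀ B : Set Y, IsGSpace B

def Cp (X : Type*) [TopologicalSpace X] : Type _ := {f : X → ℝ // Continuous f}

instance (X : Type*) [TopologicalSpace X] : TopologicalSpace (Cp X) :=
  inferInstanceAs (TopologicalSpace {f : X → ℝ // Continuous f})

def CpI (X : Type*) [TopologicalSpace X] : Type _ := {f : X → unitInterval // Continuous f}

instance (X : Type*) [TopologicalSpace X] : TopologicalSpace (CpI X) :=
  inferInstanceAs (TopologicalSpace {f : X → unitInterval // Continuous f})

def CountablyTight (X : Type*) [TopologicalSpace X] : Prop :=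
  ∀ (A : Set X) (x : X), x ∈ closure A → ∃ B ⊆ A, B.Countable ∧ x ∈ closure B

def CountablyCompactSpace' (Y : Type*) [TopologicalSpace Y] : Prop :=
  ∀ S : Set Y, S.Infinite → ∃ x : Y, IsLimitPointOf x S

def DULC {X : Type*} [TopologicalSpace X] (A : Set (CpI X)) : Prop :=
  ∀ (f : ℕ → CpI X), (∀ n, f n ∈ A) → ∀ (x : ℕ → X) (𝒰 𝒱 : Ultrafilter ℕ),
    (∃ y : X, Filter.Tendsto x (𝒱 : Filter ℕ) (nhds y)) →
    ∀ (g h : ℕ → unitInterval) (u v : unitInterval),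
      (∀ n, Filter.Tendsto (fun m => (f n).1 (x m)) (𝒱 : Filter ℕ) (nhds (g n))) →
      Filter.Tendsto g (𝒰 : Filter ℕ) (nhds u) →
      (∀ m, Filter.Tendsto (fun n => (f n).1 (x m)) (𝒰 : Filter ℕ) (nhds (h m))) →
      Filter.Tendsto h (𝒱 : Filter ℕ) (nhds v) →
      u = v

def DLC {X : Type*} [TopologicalSpace X] (A : Set (CpI X)) : Prop :=
  ∀ (f : ℕ → CpI X), (∀ n, f n ∈ A) → ∀ (x : ℕ → X),
    ∀ (g h : ℕ → unitInterval) (u v : unitInterval),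
      (∀ n, Filter.Tendsto (fun m => (f n).1 (x m)) Filter.atTop (nhds (g n))) →
      Filter.Tendsto g Filter.atTop (nhds u) →
      (∀ m, Filter.Tendsto (fun n => (f n).1 (x m)) Filter.atTop (nhds (h m))) →
      Filter.Tendsto h Filter.atTop (nhds v) →
      u = v

/-! A subset `A` of `B ⊆ Cp(X)` that is countably compact in `B` is pointwise bounded, so its
closure in `ℝ^X` is compact, and it remains to show that this closure lies in `B`. Given `g` in it
and a point `x₀`, choose `aₙ ∈ A` and countable sets `Cₙ ⊆ D` alternately: `aₙ` approximates `g` at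
`x₀` and at finitely many points of the earlier `Cₖ`, and `Cₙ` is dense in `D` for the pseudometric
defined by `g, a₀, …, aₙ₋₁`. A cluster point `φ ∈ B` of `(aₙ)` agrees with `g` at `x₀` and on
`⋃ Cₙ`. For `x ∈ D`, take `yₙ ∈ Cₙ` with `g yₙ → g x` and `aᵢ yₙ → aᵢ x`, and a cluster point
`p ∈ D` of `(yₙ)`: then `φ p = g x` and `aᵢ p = aᵢ x` for all `i`, hence `φ x = φ p = g x`. Since
`D` is dense, `φ` does not depend on `x₀`, so `g = φ ∈ B`. -/

section ClusterPoints

variable {Z : Type*} [TopologicalSpace Z]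

theorem MapClusterPt.eq_of_tendsto [T2Space Z] {ι : Type*} {F : Filter ι} {u : ι → Z} {x y : Z}
    (hx : MapClusterPt x F u) (hy : Tendsto u F (𝓝 y)) : x = y :=
  eq_of_nhds_neBot (ClusterPt.mono hx hy)

theorem MapClusterPt.mem_of_isClosed {ι : Type*} {F : Filter ι} {u : ι → Z} {x : Z} {K : Set Z}
    (hx : MapClusterPt x F u) (hK : IsClosed K) (hu : ∀ i, u i ∈ K) : x ∈ K :=
  hK.closure_subset (hx.mem_closure_of_mem _ (mem_map.2 (univ_mem' hu)))

theorem CountablyCompactIn.exists_mapClusterPt {A B : Set Z} (h : CountablyCompactIn A B)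
    (hAB : A ⊆ B) {u : ℕ → Z} (hu : ∀ n, u n ∈ A) : ∃ z ∈ B, MapClusterPt z atTop u := by
  by_cases hfin : (range u).Finite
  · obtain ⟨_, ⟨n, rfl⟩, hn⟩ :=
      hfin.isCompact.exists_mapClusterPt_of_frequently (l := atTop)
        (Frequently.of_forall mem_range_self)
    exact ⟨u n, hAB (hu n), hn⟩
  obtain ⟨z, hzB, hz⟩ := h (range u) (range_subset_iff.2 hu) hfin
  refine ⟨z, hzB, mapClusterPt_iff_frequently.2 fun s hs => ?_⟩
  obtain ⟨U, hUs, hUo, hzU⟩ := mem_nhds_iff.1 hs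
  rw [Nat.frequently_atTop_iff_infinite]
  refine Infinite.of_image u ((hz U hUo hzU).mono ?_)
  rw [← image_preimage_eq_range_inter]
  exact image_mono fun _ hn => hUs hn

theorem CountablyCompactSpace'.isCountablyCompact_univ (h : CountablyCompactSpace' Z) :
    IsCountablyCompact (univ : Set Z) :=
  IsCountablyCompact.of_seq_clusterPt fun u _ =>
    CountablyCompactIn.exists_mapClusterPt (u := u)
      (fun S _ hS => (h S hS).imp fun _ hz => ⟨trivial, hz⟩) subset_rfl fun _ => trivial

end ClusterPoints

theorem tendsto_of_eventually_dist_lt_one_div {M : Type*} [PseudoMetricSpace M] {u : ℕ → M}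
    {z : M} (h : ∀ᶠ n in atTop, dist (u n) z < 1 / ((n : ℝ) + 1)) : Tendsto u atTop (𝓝 z) :=
  tendsto_iff_dist_tendsto_zero.2 <| squeeze_zero' (Eventually.of_forall fun _ => dist_nonneg)
    (h.mono fun _ => le_of_lt) tendsto_one_div_add_atTop_nhds_zero_nat

theorem Real.isBounded_of_forall_seq_mapClusterPt {s : Set ℝ}
    (h : ∀ u : ℕ → ℝ, (∀ n, u n ∈ s) → ∃ z, MapClusterPt z atTop u) : Bornology.IsBounded s := by
  by_contra hs
  simp only [isBounded_iff_forall_norm_le, not_exists, not_forall, not_le] at hs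
  choose u hus hu using fun n : ℕ => hs n
  obtain ⟨z, hz⟩ := h u hus
  have hfar : ∀ᶠ n : ℕ in atTop, ‖z‖ + 1 < ‖u n‖ :=
    (tendsto_natCast_atTop_atTop.eventually_gt_atTop (‖z‖ + 1)).mono fun n hn => hn.trans (hu n)
  obtain ⟨n, hnear, hn⟩ :=
    ((hz.frequently (Metric.ball_mem_nhds z one_pos)).and_eventually hfar).exists
  rw [dist_eq_norm] at hnear
  linarith [norm_sub_norm_le (u n) z]

theorem isCompact_closure_of_forall_seq_mapClusterPt {X : Type*} {S : Set (X → ℝ)}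
    (h : ∀ a : ℕ → X → ℝ, (∀ n, a n ∈ S) → ∃ φ, MapClusterPt φ atTop a) :
    IsCompact (closure S) := by
  have hbdd : ∀ x, Bornology.IsBounded (Function.eval x '' S) := fun x =>
    Real.isBounded_of_forall_seq_mapClusterPt fun u hu => by
      choose a haS hau using hu
      obtain ⟨φ, hφ⟩ := h a haS
      refine ⟨φ x, ?_⟩
      convert hφ.continuousAt_comp (continuous_apply x).continuousAt
      exact funext fun n => (hau n).symm
  refine (isCompact_univ_pi fun x => (hbdd x).isCompact_closure).of_isClosed_subset
    isClosed_closure ?_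
  rw [← closure_pi_set]
  exact closure_mono (subset_pi_eval_image univ S)

section Approximation

variable {X : Type*}

theorem exists_mem_forall_dist_lt_of_mem_closure {S : Set (X → ℝ)} {g : X → ℝ}
    (hg : g ∈ closure S) (T : Finset X) {ε : ℝ} (hε : 0 < ε) :
    ∃ f ∈ S, ∀ w ∈ T, dist (f w) (g w) < ε := by
  have hnear : ∀ᶠ f in 𝓝 g, ∀ w ∈ T, dist (f w) (g w) < ε :=
    (eventually_all_finset T).2 fun w _ =>
      ((continuous_apply w).tendsto g).eventually (Metric.ball_mem_nhds (g w) hε)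
  obtain ⟨f, hf, hfS⟩ := (hnear.and_frequently (mem_closure_iff_frequently.1 hg)).exists
  exact ⟨f, hfS, hf⟩

theorem exists_seq_mem_forall_finset_dist_lt {D : Set X} (hD : D.Nonempty)
    (L : Finset (X → ℝ)) :
    ∃ c : ℕ → X, (∀ j, c j ∈ D) ∧ ∀ x ∈ D, ∀ ε > 0, ∃ j, ∀ f ∈ L, dist (f x) (f (c j)) < ε := by
  let Ψ : X → L → ℝ := fun x f => f.1 x
  have : Nonempty (Ψ '' D) := (hD.image Ψ).to_subtype
  choose c hcD hc using fun j => (TopologicalSpace.denseSeq (Ψ '' D) j).2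
  refine ⟨c, hcD, fun x hx ε hε => ?_⟩
  have hΨx : Ψ x ∈ closure (range (Ψ ∘ c)) := by
    have := Subtype.dense_iff.1 (TopologicalSpace.denseRange_denseSeq (Ψ '' D)) ⟨x, hx, rfl⟩
    rwa [← range_comp, show Subtype.val ∘ _ = Ψ ∘ c from funext fun j => (hc j).symm] at this
  obtain ⟨_, ⟨j, rfl⟩, hj⟩ := Metric.mem_closure_iff.1 hΨx ε hε
  exact ⟨j, fun f hf => (dist_pi_lt_iff hε).1 hj ⟨f, hf⟩⟩

theorem exists_seq_tendsto_of_mem_closure {S : Set (X → ℝ)} {g : X → ℝ}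
    {D : Set X} (hD : D.Nonempty) (hg : g ∈ closure S) (x₀ : X) :
    ∃ a : ℕ → X → ℝ, (∀ n, a n ∈ S) ∧ Tendsto (fun n => a n x₀) atTop (𝓝 (g x₀)) ∧
      ∀ x ∈ D, ∃ y : ℕ → X, (∀ n, y n ∈ D) ∧ Tendsto (g ∘ y) atTop (𝓝 (g x)) ∧
        (∀ i, Tendsto (a i ∘ y) atTop (𝓝 (a i x))) ∧
        ∀ n, Tendsto (fun m => a m (y n)) atTop (𝓝 (g (y n))) := by
  classical
  choose c hcD hc using fun L : Finset (X → ℝ) =>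
    exists_seq_mem_forall_finset_dist_lt hD (insert g L)
  choose f hfS hf using fun (T : Finset X) (n : ℕ) =>
    exists_mem_forall_dist_lt_of_mem_closure hg T (Nat.one_div_pos_of_nat (α := ℝ) (n := n))
  -- stage `n` approximates `g` at `x₀` and at the first `n` points of `c L'` for every subfamily
  -- `L'` of the functions chosen so far; these include the families `L k` of all earlier stages
  let T (L : Finset (X → ℝ)) (n : ℕ) : Finset X :=
    insert x₀ ((L.powerset ×ˢ Finset.range n).image fun q => c q.1 q.2)
  let L : ℕ → Finset (X → ℝ) := fun n => Nat.rec ∅ (fun n L => insert (f (T L n) n) L) n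
  let a (n : ℕ) : X → ℝ := f (T (L n) n) n
  have hL_succ (n : ℕ) : L (n + 1) = insert (a n) (L n) := rfl
  have hL_mono : Monotone L :=
    monotone_nat_of_le_succ fun n => (hL_succ n).symm ▸ Finset.subset_insert _ _
  have ha_mem {i n : ℕ} (h : i < n) : a i ∈ L n :=
    hL_mono h (hL_succ i ▸ Finset.mem_insert_self _ _)
  have ha (n : ℕ) : ∀ w ∈ T (L n) n, dist (a n w) (g w) < 1 / (n + 1) := hf _ n
  refine ⟨a, fun n => hfS _ n, tendsto_of_eventually_dist_lt_one_div <|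
    Eventually.of_forall fun n => ha n x₀ (Finset.mem_insert_self _ _), fun x hx => ?_⟩
  choose j hj using fun n : ℕ => hc (L n) x hx (1 / (n + 1)) Nat.one_div_pos_of_nat
  refine ⟨fun n => c (L n) (j n), fun n => hcD _ _, ?_, fun i => ?_, fun n => ?_⟩
  · refine tendsto_of_eventually_dist_lt_one_div <| Eventually.of_forall fun n => ?_
    rw [dist_comm]
    exact hj n g (Finset.mem_insert_self _ _)
  · refine tendsto_of_eventually_dist_lt_one_div <| (eventually_gt_atTop i).mono fun n hn => ?_
    rw [dist_comm]
    exact hj n (a i) (Finset.mem_insert_of_mem (ha_mem hn))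
  · refine tendsto_of_eventually_dist_lt_one_div <|
      (eventually_ge_atTop (max n (j n + 1))).mono fun m hm => ha m _ ?_
    refine Finset.mem_insert_of_mem (Finset.mem_image.2 ⟨(L n, j n), ?_, rfl⟩)
    exact Finset.mem_product.2 ⟨Finset.mem_powerset.2 (hL_mono (le_of_max_le_left hm)),
      Finset.mem_range.2 (le_of_max_le_right hm)⟩

end Approximation

section PointwiseClosure

variable {X : Type*} [TopologicalSpace X] {S B : Set (X → ℝ)} {D : Set X}

theorem exists_mem_eqOn_insert_of_mem_closure (hD : IsCountablyCompact D) (hDne : D.Nonempty)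
    (hSc : ∀ f ∈ S, Continuous f) (hBc : ∀ φ ∈ B, Continuous φ)
    (hSB : ∀ a : ℕ → X → ℝ, (∀ n, a n ∈ S) → ∃ φ ∈ B, MapClusterPt φ atTop a)
    {g : X → ℝ} (hg : g ∈ closure S) (x₀ : X) : ∃ φ ∈ B, EqOn φ g (insert x₀ D) := by
  obtain ⟨a, haS, hax₀, happrox⟩ := exists_seq_tendsto_of_mem_closure hDne hg x₀
  obtain ⟨φ, hφB, hφ⟩ := hSB a haS
  have hφ_eval {w : X} {c : ℝ} (h : Tendsto (fun n => a n w) atTop (𝓝 c)) : φ w = c :=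
    (hφ.continuousAt_comp (continuous_apply w).continuousAt).eq_of_tendsto h
  refine ⟨φ, hφB, ?_⟩
  rintro x (rfl | hx)
  · exact hφ_eval hax₀
  obtain ⟨y, hyD, hgy, hay, hy⟩ := happrox x hx
  obtain ⟨p, -, hp⟩ := hD.seq_clusterPt y (Eventually.of_forall hyD)
  have hφp : φ p = g x := by
    refine (hp.continuousAt_comp (hBc φ hφB).continuousAt).eq_of_tendsto ?_
    rwa [show φ ∘ y = g ∘ y from funext fun n => hφ_eval (hy n)]
  have hap (i : ℕ) : a i x = a i p :=
    ((hp.continuousAt_comp (hSc _ (haS i)).continuousAt).eq_of_tendsto (hay i)).symm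
  have hφxp : φ x = φ p :=
    hφ.mem_of_isClosed (isClosed_eq (continuous_apply x) (continuous_apply p)) hap
  rw [hφxp, hφp]

theorem closure_subset_of_forall_seq_mapClusterPt (hdense : Dense D) (hD : IsCountablyCompact D)
    (hSc : ∀ f ∈ S, Continuous f) (hBc : ∀ φ ∈ B, Continuous φ)
    (hSB : ∀ a : ℕ → X → ℝ, (∀ n, a n ∈ S) → ∃ φ ∈ B, MapClusterPt φ atTop a) :
    closure S ⊆ B := by
  intro g hg
  rcases isEmpty_or_nonempty X with hX | hX
  · obtain ⟨f, hf⟩ := closure_nonempty_iff.1 ⟨g, hg⟩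
    obtain ⟨φ, hφB, -⟩ := hSB (fun _ => f) fun _ => hf
    rwa [Subsingleton.elim g φ]
  have hφ' := exists_mem_eqOn_insert_of_mem_closure hD hdense.nonempty hSc hBc hSB hg
  obtain ⟨φ, hφB, hφ⟩ := hφ' hX.some
  suffices g = φ by rwa [this]
  funext x
  obtain ⟨ψ, hψB, hψ⟩ := hφ' x
  have hψφ : ψ = φ := Continuous.ext_on hdense (hBc ψ hψB) (hBc φ hφB) fun z hz =>
    (hψ (mem_insert_of_mem x hz)).trans (hφ (mem_insert_of_mem _ hz)).symm
  rw [← hψ (mem_insert x D), hψφ]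

end PointwiseClosure

theorem grothendieck_of_dense_countablyCompact_general
    {X : Type*} [TopologicalSpace X]
    (D : Set X) (hdense : Dense D) (hcc : CountablyCompactSpace' D) :
    IsHereditaryGSpace (Cp X) := by
  have hD : IsCountablyCompact D := by
    simpa using Subtype.isCountablyCompact_iff.1 hcc.isCountablyCompact_univ
  intro B A hA
  let ι : B → X → ℝ := fun f => f.1.1
  have hι : IsEmbedding ι :=
    (IsEmbedding.subtypeVal : IsEmbedding (Subtype.val : {f : X → ℝ // Continuous f} → X → ℝ)).comp
      IsEmbedding.subtypeVal
  have hseq (a : ℕ → X → ℝ) (ha : ∀ n, a n ∈ ι '' A) : ∃ φ ∈ range ι, MapClusterPt φ atTop a := by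
    choose u huA hu using ha
    obtain rfl : ι ∘ u = a := funext hu
    obtain ⟨z, -, hz⟩ := hA.exists_mapClusterPt (subset_univ A) huA
    exact ⟨ι z, mem_range_self z, hz.continuousAt_comp hι.continuous.continuousAt⟩
  have hsub : closure (ι '' A) ⊆ range ι :=
    closure_subset_of_forall_seq_mapClusterPt hdense hD (by rintro _ ⟨f, -, rfl⟩; exact f.1.2)
      (by rintro _ ⟨f, rfl⟩; exact f.1.2) hseq
  rw [hι.isInducing.closure_eq_preimage_closure_image, hι.isInducing.isCompact_preimage_iff hsub]
  exact isCompact_closure_of_forall_seq_mapClusterPt fun a ha => (hseq a ha).imp fun _ h => h.2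

/-- A completely regular Hausdorff space with a dense countably compact
subspace is Grothendieck: `Cp(X)` is a hereditary g-space. -/
theorem grothendieck_of_dense_countablyCompact
    {X : Type*} [TopologicalSpace X] [CompletelyRegularSpace X] [T2Space X]
    (D : Set X) (hdense : Dense D) (hcc : CountablyCompactSpace' D) :
    IsHereditaryGSpace (Cp X) :=
  grothendieck_of_dense_countablyCompact_general D hdense hcc
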